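/- arXiv:2402.05984 — 4 statements merged into one kernel-verified Lean document; each statement's English description precedes it below -/
import Mathlib

section
/- Let G be the graph with vertex set T and edges {t't : t' ∈ A*_t}. Then G admits no proper colouring c : T → ℕ; that is, for every function c : T → ℕ there exist two adjacent vertices t, t' of G with c(t) = c(t'). -/
/-- An element of the tree `T`: an injective, co-infinite sequence `t : α → ℕ`
(with `ℕ = {1,2,3,…}`) of countable ordinal length `α`.  We encode such a
sequence as a total function `f : Ordinal → ℕ` taking a *positive* value
exactly on the ordinals `β < len` (the value `0` plays the role of
"undefined", which is harmless since the paper's `ℕ` starts at `1`). -/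
structure CSeq where
  /-- the length (domain) of the sequence, a countable ordinal -/
  len : Ordinal
  len_countable : len < Ordinal.omega 1
  /-- the sequence itself, with `f β = 0` meaning "β is outside the domain" -/
  f : Ordinal → ℕ
  dom_iff : ∀ β, β < len ↔ f β ≠ 0
  inj : ∀ β γ, β < len → γ < len → f β = f γ → β = γ
  coinf : {n : ℕ | n ≠ 0 ∧ n ∉ Set.range f}.Infinite

namespace CSeq

/-- the extension order on `T`: `s ≤ t` iff `s = t ↾ dom s`. -/
def Ext (s t : CSeq) : Prop := ∀ β, s.f β ≠ 0 → t.f β = s.f β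

/-- strict extension: `s < t`. -/
def ExtLt (s t : CSeq) : Prop := s.Ext t ∧ s ≠ t

/-- the image `im t ⊆ ℕ = {1,2,…}` of a sequence `t`. -/
def im (t : CSeq) : Set ℕ := {n | n ≠ 0 ∧ n ∈ Set.range t.f}

/-- `t ∈ Σ(T)`: the length of `t` is a successor ordinal. -/
def IsSucc (t : CSeq) : Prop := ∃ α, t.len = α + 1

/-- `last t`: the last value of a sequence (of successor length). -/
noncomputable def lastVal (t : CSeq) : ℕ := t.f (Ordinal.pred t.len)

/-- the restriction `t ↾ γ` of a sequence `t` to an initial segment `γ ≤ dom t`. -/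
noncomputable def restrict (t : CSeq) (γ : Ordinal) (h : γ ≤ t.len) : CSeq where
  len := γ
  len_countable := lt_of_le_of_lt h t.len_countable
  f := fun β => if β < γ then t.f β else 0
  dom_iff := by
    intro β
    constructor
    · intro hβ
      simpa [hβ] using (t.dom_iff β).1 (lt_of_lt_of_le hβ h)
    · intro hβ
      by_contra hc
      simp [hc] at hβ
  inj := by
    intro β γ' hβ hγ
    simp only [if_pos hβ, if_pos hγ]
    exact t.inj β γ' (lt_of_lt_of_le hβ h) (lt_of_lt_of_le hγ h)
  coinf := t.coinf.mono (by
    rintro n ⟨hn0, hn⟩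
    refine ⟨hn0, ?_⟩
    rintro ⟨β, hβ⟩
    by_cases hb : β < γ
    · exact hn ⟨β, by simpa [hb] using hβ⟩
    · simp only [if_neg hb] at hβ
      exact hn0 hβ.symm)

/-- `t* := t ↾ α` for `t` of successor length `α + 1`: the immediate
predecessor of `t` in the tree. -/
noncomputable def star (t : CSeq) : CSeq := t.restrict (Ordinal.pred t.len) (Ordinal.pred_le_self _)

/-- `A_t := {s ≤ t : s ∈ Σ(T), last s = min (im t \ im s*)}`. -/
def A (t : CSeq) : Set CSeq :=
  {s | s.Ext t ∧ s.IsSucc ∧ s.lastVal = sInf (t.im \ s.star.im)}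

/-- `A*_t := {s* : s ∈ A_t}`. -/
def Astar (t : CSeq) : Set CSeq := star '' A t

/-- the graph `G` with vertex set `T` and edges `{t't : t' ∈ A*_t}`. -/
def G : SimpleGraph CSeq := SimpleGraph.fromRel (fun t' t => t' ∈ Astar t)

/-- the graph `G'` with vertex set `T` and edges `{t't : t' ∈ A_t}`. -/
def G' : SimpleGraph CSeq := SimpleGraph.fromRel (fun t' t => t' ∈ A t)

/-- two `t`–`t'` paths are independent (internally disjoint) if they share no
vertices other than `t` and `t'`. -/
def InternallyDisjoint {t t' : CSeq} (p q : G.Path t t') : Prop :=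
  ∀ v, v ∈ p.1.support → v ∈ q.1.support → v = t ∨ v = t'

/-- `t'` is a `k`-extension of `t ∈ Σ(T)` if `t' > t` and every element of
`im t' \ im t` is greater than `a_{k+1}`, where `a_1 < … < a_{k+1}` are the
`k+1` smallest elements of `ℕ \ (im t ∪ [last t])`.  (Recall `Nat.nth p k` is
the `(k+1)`-st element of `{n | p n}` in increasing order.) -/
def IsKExt (k : ℕ) (t t' : CSeq) : Prop :=
  t.ExtLt t' ∧ ∀ n ∈ t'.im \ t.im,
    Nat.nth (fun m => m ∉ t.im ∧ t.lastVal < m) k < n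

end CSeq

/-! Given `c`, build an `ω`-chain `s₀ < s₁ < ⋯` in which each `sₖ₊₁` is a *clean* extension of
`sₖ`: all new values exceed a bound `Nₖ`, and the value at position `len sₖ` is the least of
them, so that `sₖ ∈ A*_{sₖ₊₁}`. At stage `k` we take a clean extension of colour `k` whenever one
exists. The bounds grow fast enough that the union `U` is still co-infinite and is a clean
extension of every `sₖ`. With `k := c U`, the sequence `U` shows that `sₖ₊₁` received colour `k`,
and `sₖ₊₁` is adjacent to `U`. -/

namespace CSeq

theorem f_eq_zero_of_le {t : CSeq} {β : Ordinal} (h : t.len ≤ β) : t.f β = 0 :=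
  not_not.1 fun hβ => h.not_gt ((t.dom_iff β).2 hβ)

theorem f_len (t : CSeq) : t.f t.len = 0 := f_eq_zero_of_le le_rfl

@[ext]
theorem ext {s t : CSeq} (h : s.f = t.f) : s = t := by
  have hlen : s.len = t.len :=
    eq_of_forall_lt_iff fun β => by rw [s.dom_iff, t.dom_iff, h]
  cases s; cases t
  cases hlen; cases h
  rfl

instance : Preorder CSeq where
  le := Ext
  le_refl _ _ _ := rfl
  le_trans s t u hst htu β hβ := by
    rw [htu β (by rwa [hst β hβ]), hst β hβ]

theorem len_mono : Monotone len := fun s t h =>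
  le_of_forall_lt fun β hβ =>
    (t.dom_iff β).2 (by rw [h β ((s.dom_iff β).1 hβ)]; exact (s.dom_iff β).1 hβ)

theorem im_mono {s t : CSeq} (h : s ≤ t) : s.im ⊆ t.im := by
  rintro x ⟨hx, β, rfl⟩
  exact ⟨hx, β, h β hx⟩

theorem restrict_le (t : CSeq) (γ : Ordinal) (h : γ ≤ t.len) : t.restrict γ h ≤ t := by
  intro β hβ
  simp only [restrict] at hβ ⊢
  split_ifs at hβ ⊢
  · rfl
  · exact absurd rfl hβ

theorem restrict_len_of_le {s t : CSeq} (hst : s ≤ t) (h : s.len ≤ t.len) :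
    t.restrict s.len h = s := by
  ext β
  simp only [restrict]
  split_ifs with hβ
  · exact hst β ((s.dom_iff β).1 hβ)
  · exact (f_eq_zero_of_le (not_lt.1 hβ)).symm

theorem star_restrict_add_one (t : CSeq) (γ : Ordinal) (h : γ + 1 ≤ t.len) :
    (t.restrict (γ + 1) h).star = t.restrict γ ((Order.lt_add_one_iff.2 le_rfl).le.trans h) := by
  ext β
  simp only [star, restrict, Ordinal.pred_add_one]
  split_ifs with h1 h2 <;> first | rfl | exact absurd (h1.trans (Order.lt_add_one_iff.2 le_rfl)) h2

theorem lastVal_restrict_add_one (t : CSeq) (γ : Ordinal) (h : γ + 1 ≤ t.len) :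
    (t.restrict (γ + 1) h).lastVal = t.f γ := by
  simp [lastVal, restrict, Ordinal.pred_add_one]

def Clean (N : ℕ) (s v : CSeq) : Prop :=
  s ≤ v ∧ s.len < v.len ∧ ∀ x ∈ v.im \ s.im, N < x ∧ v.f s.len ≤ x

theorem Clean.f_len_mem {N : ℕ} {s v : CSeq} (h : Clean N s v) : v.f s.len ∈ v.im \ s.im := by
  obtain ⟨hsv, hlen, -⟩ := h
  have hne : v.f s.len ≠ 0 := (v.dom_iff s.len).1 hlen
  refine ⟨⟨hne, s.len, rfl⟩, ?_⟩
  rintro ⟨-, β, hβ⟩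
  have hsβ : s.f β ≠ 0 := hβ ▸ hne
  have hβlt : β < s.len := (s.dom_iff β).2 hsβ
  have := v.inj β s.len (hβlt.trans hlen) hlen (by rw [hsv β hsβ, hβ])
  exact hβlt.ne this

theorem Clean.sInf_eq {N : ℕ} {s v : CSeq} (h : Clean N s v) :
    sInf (v.im \ s.im) = v.f s.len :=
  IsLeast.csInf_eq ⟨h.f_len_mem, fun x hx => (h.2.2 x hx).2⟩

theorem Clean.mem_Astar {N : ℕ} {s v : CSeq} (h : Clean N s v) : s ∈ Astar v := by
  -- the witness in `A v` is `v ↾ (len s + 1)`: its last value is the least new value of `v`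
  have hle : s.len + 1 ≤ v.len := Order.add_one_le_of_lt h.2.1
  have hstar : (v.restrict (s.len + 1) hle).star = s := by
    rw [star_restrict_add_one, restrict_len_of_le h.1]
  refine ⟨v.restrict (s.len + 1) hle, ⟨restrict_le _ _ _, ⟨s.len, rfl⟩, ?_⟩, hstar⟩
  rw [hstar, lastVal_restrict_add_one, h.sInf_eq]

theorem Clean.adj {N : ℕ} {s v : CSeq} (h : Clean N s v) : G.Adj s v :=
  (SimpleGraph.fromRel_adj _ _ _).2
    ⟨fun hsv => h.2.1.ne (congrArg len hsv), Or.inl h.mem_Astar⟩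

noncomputable def snoc (s : CSeq) (a : ℕ) (ha : a ∈ {n : ℕ | n ≠ 0 ∧ n ∉ Set.range s.f}) : CSeq where
  len := s.len + 1
  len_countable := (Cardinal.isSuccLimit_omega 1).add_one_lt s.len_countable
  f := Function.update s.f s.len a
  dom_iff β := by
    rcases eq_or_ne β s.len with rfl | hβ
    · simpa using ha.1
    · rw [Function.update_of_ne hβ, ← s.dom_iff, Order.lt_add_one_iff, le_iff_lt_or_eq, or_iff_left hβ]
  inj β γ hβ hγ heq := by
    rcases eq_or_ne β s.len with rfl | hβs <;> rcases eq_or_ne γ s.len with rfl | hγs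
    · rfl
    · simp only [Function.update_self, Function.update_of_ne hγs] at heq
      exact absurd ⟨γ, heq.symm⟩ ha.2
    · simp only [Function.update_self, Function.update_of_ne hβs] at heq
      exact absurd ⟨β, heq⟩ ha.2
    · simp only [Function.update_of_ne hβs, Function.update_of_ne hγs] at heq
      rw [Order.lt_add_one_iff] at hβ hγ
      exact s.inj β γ (hβ.lt_of_ne hβs) (hγ.lt_of_ne hγs) heq
  coinf := by
    refine (s.coinf.sdiff (Set.finite_singleton a)).mono ?_
    rintro n ⟨⟨hn0, hns⟩, hna⟩
    refine ⟨hn0, fun ⟨β, hβ⟩ => ?_⟩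
    rcases eq_or_ne β s.len with rfl | hβs
    · exact hna (by simpa using hβ.symm)
    · exact hns ⟨β, by simpa [Function.update_of_ne hβs] using hβ⟩

theorem exists_clean (s : CSeq) (N : ℕ) : ∃ v, Clean N s v := by
  obtain ⟨a, ha, haN⟩ := s.coinf.exists_gt N
  refine ⟨s.snoc a ha, fun β hβ => Function.update_of_ne ?_ _ _, Order.lt_add_one_iff.2 le_rfl, ?_⟩
  · rintro rfl
    exact hβ s.f_len
  · rintro x ⟨⟨hx0, β, rfl⟩, hxs⟩
    rcases eq_or_ne β s.len with rfl | hβs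
    · exact ⟨by simpa [snoc] using haN, le_rfl⟩
    · exact absurd ⟨hx0, β, by simp [snoc, Function.update_of_ne hβs]⟩ hxs

noncomputable def empty : CSeq where
  len := 0
  len_countable := Ordinal.omega_pos 1
  f _ := 0
  dom_iff β := by simp
  inj β _ hβ := absurd hβ (zero_le (a := β)).not_gt
  coinf := by
    refine (Set.finite_singleton 0).infinite_compl.mono fun n hn => ⟨hn, ?_⟩
    rintro ⟨β, rfl⟩
    exact hn rfl

section Limit

variable {s : ℕ → CSeq}

/-- If no `s n` is defined at `β`, any index gives the value `0`. -/
noncomputable def limitF (s : ℕ → CSeq) (β : Ordinal) : ℕ :=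
  (s (Classical.epsilon fun n => (s n).f β ≠ 0)).f β

theorem limitF_eq (hs : Monotone s) {n : ℕ} {β : Ordinal} (h : (s n).f β ≠ 0) :
    limitF s β = (s n).f β := by
  have hm := Classical.epsilon_spec (p := fun n => (s n).f β ≠ 0) ⟨n, h⟩
  rw [limitF, ← hs (le_max_left _ n) β hm, hs (le_max_right _ n) β h]

theorem mem_range_limitF_iff (hs : Monotone s) {x : ℕ} (hx : x ≠ 0) :
    x ∈ Set.range (limitF s) ↔ ∃ n, x ∈ (s n).im := by
  constructor
  · rintro ⟨β, rfl⟩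
    exact ⟨_, hx, β, rfl⟩
  · rintro ⟨n, -, β, rfl⟩
    exact ⟨β, limitF_eq hs hx⟩

noncomputable def limit (s : ℕ → CSeq) (hs : Monotone s)
    (hcoinf : {n : ℕ | n ≠ 0 ∧ n ∉ Set.range (limitF s)}.Infinite) : CSeq where
  len := ⨆ n, (s n).len
  len_countable := Ordinal.iSup_lt_omega_one fun n => (s n).len_countable
  f := limitF s
  dom_iff β := by
    rw [Ordinal.lt_iSup_iff]
    constructor
    · rintro ⟨n, hn⟩
      rw [limitF_eq hs (((s n).dom_iff β).1 hn)]
      exact ((s n).dom_iff β).1 hn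
    · exact fun h => ⟨_, ((s _).dom_iff β).2 h⟩
  inj β γ hβ hγ heq := by
    obtain ⟨m, hβm⟩ := Ordinal.lt_iSup_iff.1 hβ
    obtain ⟨n, hγn⟩ := Ordinal.lt_iSup_iff.1 hγ
    have hβ' := hβm.trans_le (len_mono (hs (le_max_left m n)))
    have hγ' := hγn.trans_le (len_mono (hs (le_max_right m n)))
    rw [limitF_eq hs (((s _).dom_iff β).1 hβ'), limitF_eq hs (((s _).dom_iff γ).1 hγ')] at heq
    exact (s _).inj β γ hβ' hγ' heq
  coinf := hcoinf

theorem le_limit (hs : Monotone s) (hcoinf) (n : ℕ) : s n ≤ limit s hs hcoinf :=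
  fun _ hβ => limitF_eq hs hβ

theorem mem_im_limit_iff (hs : Monotone s) (hcoinf) {x : ℕ} :
    x ∈ (limit s hs hcoinf).im ↔ ∃ n, x ∈ (s n).im :=
  ⟨fun hx => (mem_range_limitF_iff hs hx.1).1 hx.2,
    fun ⟨n, hn⟩ => ⟨hn.1, (mem_range_limitF_iff hs hn.1).2 ⟨n, hn⟩⟩⟩

end Limit

structure CleanChain where
  seq : ℕ → CSeq
  bound : ℕ → ℕ
  bound_mono : Monotone bound
  clean_succ : ∀ n, Clean (bound n) (seq n) (seq (n + 1))
  f_len_le : ∀ n, (seq (n + 1)).f (seq n).len ≤ bound (n + 1)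
  exists_gap : ∀ b, ∃ n x, b < x ∧ x ≠ 0 ∧ x ∉ (seq n).im ∧ x ≤ bound n

namespace CleanChain

variable (C : CleanChain)

theorem monotone : Monotone C.seq := monotone_nat_of_le_succ fun n => (C.clean_succ n).1

theorem bound_lt_of_mem_of_notMem {x m n : ℕ} (hm : x ∈ (C.seq m).im) (hn : x ∉ (C.seq n).im) :
    C.bound n < x := by
  induction m with
  | zero => exact absurd (im_mono (C.monotone (Nat.zero_le n)) hm) hn
  | succ m ih =>
    by_cases hxm : x ∈ (C.seq m).im
    · exact ih hxm
    · have hnm : n ≤ m := not_lt.1 fun hmn => hn (im_mono (C.monotone hmn) hm)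
      exact (C.bound_mono hnm).trans_lt ((C.clean_succ m).2.2 x ⟨hm, hxm⟩).1

theorem coinf_limitF : {n : ℕ | n ≠ 0 ∧ n ∉ Set.range (limitF C.seq)}.Infinite := by
  refine Set.infinite_of_forall_exists_gt fun b => ?_
  obtain ⟨n, x, hbx, hx0, hxn, hxb⟩ := C.exists_gap b
  refine ⟨x, ⟨hx0, fun hx => ?_⟩, hbx⟩
  obtain ⟨m, hm⟩ := (mem_range_limitF_iff C.monotone hx0).1 hx
  exact (C.bound_lt_of_mem_of_notMem hm hxn).not_ge hxb

noncomputable def limit : CSeq := CSeq.limit C.seq C.monotone C.coinf_limitF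

theorem clean_limit (n : ℕ) : Clean (C.bound n) (C.seq n) C.limit := by
  have hlen := (C.clean_succ n).2.1
  have hsucc := le_limit C.monotone C.coinf_limitF (n + 1)
  have hhead : C.limit.f (C.seq n).len = (C.seq (n + 1)).f (C.seq n).len :=
    hsucc _ (((C.seq (n + 1)).dom_iff _).1 hlen)
  refine ⟨le_limit _ _ n, hlen.trans_le (len_mono hsucc), ?_⟩
  rintro x ⟨hx, hxn⟩
  obtain ⟨m, hm⟩ := (mem_im_limit_iff _ _).1 hx
  rw [hhead]
  by_cases hx1 : x ∈ (C.seq (n + 1)).im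
  · exact (C.clean_succ n).2.2 x ⟨hx1, hxn⟩
  · have hgt := C.bound_lt_of_mem_of_notMem hm hx1
    exact ⟨(C.bound_mono n.le_succ).trans_lt hgt, (C.f_len_le n).trans hgt.le⟩

end CleanChain

theorem exists_clean_forcing (c : CSeq → ℕ) (s : CSeq) (N k : ℕ) :
    ∃ v, Clean N s v ∧ ((∃ w, Clean N s w ∧ c w = k) → c v = k) := by
  by_cases h : ∃ w, Clean N s w ∧ c w = k
  · obtain ⟨w, hw, hwk⟩ := h
    exact ⟨w, hw, fun _ => hwk⟩
  · obtain ⟨v, hv⟩ := exists_clean s N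
    exact ⟨v, hv, fun h' => absurd h' h⟩

/-- Raising the bound above a number `> k` omitted by the new sequence is what keeps the union
of the chain co-infinite. -/
noncomputable def diagonalStep (c : CSeq → ℕ) (k : ℕ) (p : CSeq × ℕ) : CSeq × ℕ :=
  let v := (exists_clean_forcing c p.1 p.2 k).choose
  (v, max p.2 (max (v.f p.1.len) (v.coinf.exists_gt k).choose))

noncomputable def diagonalSeq (c : CSeq → ℕ) : ℕ → CSeq × ℕ
  | 0 => (empty, 0)
  | k + 1 => diagonalStep c k (diagonalSeq c k)

noncomputable def diagonalChain (c : CSeq → ℕ) : CleanChain where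
  seq k := (diagonalSeq c k).1
  bound k := (diagonalSeq c k).2
  bound_mono := monotone_nat_of_le_succ fun _ => le_max_left _ _
  clean_succ k := (exists_clean_forcing c _ _ k).choose_spec.1
  f_len_le _ := (le_max_left _ _).trans (le_max_right _ _)
  exists_gap b := by
    obtain ⟨⟨hx0, hx⟩, hbx⟩ := ((diagonalSeq c (b + 1)).1.coinf.exists_gt b).choose_spec
    exact ⟨b + 1, _, hbx, hx0, fun h => hx h.2, (le_max_right _ _).trans (le_max_right _ _)⟩

theorem diagonalChain_colour (c : CSeq → ℕ) {k : ℕ}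
    (h : ∃ w, Clean ((diagonalChain c).bound k) ((diagonalChain c).seq k) w ∧ c w = k) :
    c ((diagonalChain c).seq (k + 1)) = k :=
  (exists_clean_forcing c _ _ k).choose_spec.2 h

end CSeq

open CSeq in
/-- The graph `G` admits no proper colouring `c : T → ℕ`:
for every `c : T → ℕ` there are adjacent vertices with the same colour. -/
theorem stmt0 :
    ∀ c : CSeq → ℕ, ∃ t t' : CSeq, G.Adj t t' ∧ c t = c t' := by
  intro c
  set C := diagonalChain c
  exact ⟨C.seq (c C.limit + 1), C.limit, (C.clean_limit _).adj,
    diagonalChain_colour c ⟨C.limit, C.clean_limit _, rfl⟩⟩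
end

section
/- The partially ordered set T, ordered by extension, contains no uncountable chain: every subset of T that is totally ordered by extension is countable. -/
open CSeq in
/-- The tree `T`, ordered by extension, has no uncountable
chain: every subset totally ordered by extension is countable. -/
theorem stmt3 (C : Set CSeq) (hC : ∀ s ∈ C, ∀ t ∈ C, s.Ext t ∨ t.Ext s) :
    C.Countable := by
  classical
  -- membership in the domain is monotone along `Ext`
  have hmono : ∀ s t : CSeq, s.Ext t → ∀ β, β < s.len → β < t.len := by
    intro s t h β hβ
    exact (t.dom_iff β).2 (by rw [h β ((s.dom_iff β).1 hβ)]; exact (s.dom_iff β).1 hβ)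
  -- extensionality for `CSeq`
  have hext : ∀ s t : CSeq, s.len = t.len → s.f = t.f → s = t := by
    rintro ⟨l, _, f, _, _, _⟩ ⟨l', _, f', _, _, _⟩ h1 h2
    simp only at h1 h2
    subst h1; subst h2; rfl
  -- `len` is injective on the chain
  have hinjlen : Set.InjOn CSeq.len C := by
    have key : ∀ s ∈ C, ∀ t ∈ C, s.Ext t → s.len = t.len → s = t := by
      intro s hs t ht hst hl
      refine hext s t hl (funext fun β => ?_)
      by_cases hβ : β < s.len
      · exact (hst β ((s.dom_iff β).1 hβ)).symm
      · have h1 : s.f β = 0 := by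
          by_contra h; exact hβ ((s.dom_iff β).2 h)
        have h2 : t.f β = 0 := by
          by_contra h; exact hβ (hl ▸ (t.dom_iff β).2 h)
        rw [h1, h2]
    intro s hs t ht hl
    rcases hC s hs t ht with h | h
    · exact key s hs t ht h hl
    · exact (key t ht s hs h hl.symm).symm
  -- the set of ordinals below some length in the chain injects into ℕ
  set D : Set Ordinal := {β | ∃ t ∈ C, β < t.len} with hD
  have hDc : D.Countable := by
    rw [Set.countable_iff_exists_injective]
    have hch : ∀ β : D, ∃ t, t ∈ C ∧ (β : Ordinal) < t.len := fun β => β.2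
    choose g hg1 hg2 using hch
    refine ⟨fun β => (g β).f β, ?_⟩
    intro β γ hfg
    rcases hC (g β) (hg1 β) (g γ) (hg1 γ) with h | h
    · have hβ : (β : Ordinal) < (g γ).len := hmono _ _ h _ (hg2 β)
      have : (g γ).f β = (g β).f β := h β ((( g β).dom_iff β).1 (hg2 β))
      exact Subtype.ext ((g γ).inj β γ hβ (hg2 γ) (this.trans hfg))
    · have hγ : (γ : Ordinal) < (g β).len := hmono _ _ h _ (hg2 γ)
      have : (g β).f γ = (g γ).f γ := h γ ((( g γ).dom_iff γ).1 (hg2 γ))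
      exact Subtype.ext ((g β).inj β γ (hg2 β) hγ (hfg.trans this.symm))
  -- the image of `len` on `C` is countable
  have hOc : (CSeq.len '' C).Countable := by
    have hsub : CSeq.len '' C ⊆ D ∪ (CSeq.len '' C \ D) := by
      intro α hα
      by_cases h : α ∈ D
      · exact Or.inl h
      · exact Or.inr ⟨hα, h⟩
    refine Set.Countable.mono hsub (hDc.union ?_)
    have hsub2 : (CSeq.len '' C \ D).Subsingleton := by
      rintro α ⟨⟨s, hs, rfl⟩, hα⟩ α' ⟨⟨t, ht, rfl⟩, hα'⟩
      by_contra hne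
      rcases lt_or_gt_of_ne hne with h | h
      · exact hα ⟨t, ht, h⟩
      · exact hα' ⟨s, hs, h⟩
    exact hsub2.countable
  exact Set.countable_of_injective_of_countable_image hinjlen hOc
end

section
/- Let G be the graph with vertex set T and edges {t't : t' ∈ A*_t}. Let t, t' ∈ T be incomparable in the extension order, let α ∈ dom(t) ∩ dom(t') be minimal with t(α) ≠ t'(α), and set s := t↾(α+1). Then every path in G from t to t' contains a vertex belonging to A*_s. -/
/-!
The sequences extending `s` form a cone containing `t` but not `t'`, since `s` and `t'`
disagree at `α`; so every walk from `t` to `t'` has an edge `u v` leaving the cone.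
Such an edge cannot come from `u ∈ A*_v`, since then `u ≤ v`. Hence `v = w*` with `w ∈ A_u`,
and `w` is comparable with `s` as both lie below `u`. If `w ≤ s`, the minimality defining
`A_u` passes to `A_s` because `im s ⊆ im u`; if `s ≤ w`, then `s ≤ w*` is excluded, so
`s = w ∈ A_s`. Either way `v ∈ A*_s`.
-/

namespace CSeq

theorem Ext.trans {a b c : CSeq} (hab : a.Ext b) (hbc : b.Ext c) : a.Ext c := by
  intro β hβ
  rw [hbc β (by rwa [hab β hβ]), hab β hβ]

theorem Ext.len_le {a b : CSeq} (h : a.Ext b) : a.len ≤ b.len := by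
  by_contra! hlt
  have ha : a.f b.len ≠ 0 := (a.dom_iff _).1 hlt
  exact lt_irrefl _ ((b.dom_iff _).2 (by rwa [h _ ha]))

theorem Ext.eq_of_len_eq {a b : CSeq} (h : a.Ext b) (hl : a.len = b.len) : a = b := by
  have hf : a.f = b.f := by
    funext β
    by_cases ha : a.f β = 0
    · have hb : ¬ β < b.len := hl ▸ fun hβ => (a.dom_iff β).1 hβ ha
      rw [ha, eq_comm, ← not_ne_iff, ← b.dom_iff]
      exact hb
    · exact (h β ha).symm
  cases a; cases b
  subst hf hl
  rfl

theorem Ext.of_ext_of_len_le {a b c : CSeq} (hac : a.Ext c) (hbc : b.Ext c)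
    (hlen : a.len ≤ b.len) : a.Ext b := by
  intro β hβ
  rw [← hbc β ((b.dom_iff β).1 (((a.dom_iff β).2 hβ).trans_le hlen)), hac β hβ]

theorem Ext.im_subset {a b : CSeq} (h : a.Ext b) : a.im ⊆ b.im := by
  rintro n ⟨hn, β, rfl⟩
  exact ⟨hn, β, h β hn⟩

theorem Ext.ext_restrict {s t : CSeq} (h : s.Ext t) {γ : Ordinal} (hγ : γ ≤ t.len)
    (hs : s.len ≤ γ) : s.Ext (t.restrict γ hγ) := by
  intro β hβ
  simp only [restrict, if_pos (((s.dom_iff β).2 hβ).trans_le hs), h β hβ]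

theorem star_ext (w : CSeq) : w.star.Ext w := by
  intro β hβ
  by_cases h : β < Ordinal.pred w.len
  · simp only [star, restrict, if_pos h]
  · simp only [star, restrict, if_neg h, ne_eq, not_true_eq_false] at hβ

theorem pred_len_eq {w : CSeq} {β : Ordinal} (hw : w.len = β + 1) :
    Ordinal.pred w.len = β := by
  rw [hw, Ordinal.pred_add_one]

theorem lt_len_of_len_eq {w : CSeq} {β : Ordinal} (hw : w.len = β + 1) : β < w.len :=
  hw ▸ Order.lt_add_one_iff.2 le_rfl

theorem im_sdiff_star {w : CSeq} {β : Ordinal} (hw : w.len = β + 1) :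
    w.im \ w.star.im = {w.lastVal} := by
  have hβ := lt_len_of_len_eq hw
  have hstar : ∀ γ, w.star.f γ = if γ < β then w.f γ else 0 := by
    intro γ
    simp only [star, restrict, pred_len_eq hw]
  ext n
  simp only [Set.mem_sdiff, Set.mem_singleton_iff, im, Set.mem_ofPred_eq, Set.mem_range,
    hstar, lastVal, pred_len_eq hw]
  constructor
  · rintro ⟨⟨hn, γ, rfl⟩, hnot⟩
    have hγ : γ ≤ β := Order.lt_add_one_iff.1 (hw ▸ (w.dom_iff γ).2 hn)
    rcases hγ.lt_or_eq with hlt | rfl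
    · exact (hnot ⟨hn, γ, if_pos hlt⟩).elim
    · rfl
  · rintro rfl
    refine ⟨⟨(w.dom_iff β).1 hβ, β, rfl⟩, ?_⟩
    rintro ⟨hn, γ, hγ⟩
    split_ifs at hγ with hlt
    · exact hlt.ne (w.inj γ β (hlt.trans hβ) hβ hγ)
    · exact hn hγ.symm

theorem Ext.ext_star_or_eq {s w : CSeq} (h : s.Ext w) (hw : w.IsSucc) :
    s.Ext w.star ∨ s = w := by
  obtain ⟨β, hβ⟩ := hw
  by_cases hs : s.len ≤ β
  · exact Or.inl (h.ext_restrict _ (pred_len_eq hβ ▸ hs))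
  · exact Or.inr (h.eq_of_len_eq (h.len_le.antisymm (hβ ▸ Order.add_one_le_iff.2 (not_le.1 hs))))

theorem self_mem_A {s : CSeq} (hs : s.IsSucc) : s ∈ A s := by
  obtain ⟨β, hβ⟩ := hs
  exact ⟨fun _ _ => rfl, ⟨β, hβ⟩, by rw [im_sdiff_star hβ, csInf_singleton]⟩

theorem mem_A_of_ext {u s w : CSeq} (hw : w ∈ A u) (hsu : s.Ext u) (hws : w.Ext s) :
    w ∈ A s := by
  obtain ⟨-, ⟨β, hβ⟩, hlast⟩ := hw
  have hmem : w.lastVal ∈ s.im \ w.star.im := by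
    have hself : w.lastVal ∈ w.im \ w.star.im := by rw [im_sdiff_star hβ]; rfl
    exact ⟨hws.im_subset hself.1, hself.2⟩
  have hsInf := Nat.sInf_mem ⟨_, hmem⟩
  refine ⟨hws, ⟨β, hβ⟩, (Nat.sInf_le hmem).antisymm' ?_⟩
  rw [hlast]
  exact Nat.sInf_le ⟨hsu.im_subset hsInf.1, hsInf.2⟩

theorem mem_Astar_of_adj {s u v : CSeq} (hadj : G.Adj u v) (hu : s.Ext u) (hv : ¬ s.Ext v) :
    v ∈ Astar s := by
  rw [G, SimpleGraph.fromRel_adj] at hadj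
  obtain ⟨-, ⟨w, hwA, rfl⟩ | ⟨w, hwA, rfl⟩⟩ := hadj
  · exact (hv (hu.trans ((star_ext w).trans hwA.1))).elim
  · rcases le_total w.len s.len with hws | hsw
    · exact ⟨w, mem_A_of_ext hwA hu (hwA.1.of_ext_of_len_le hu hws), rfl⟩
    · rcases (hu.of_ext_of_len_le hwA.1 hsw).ext_star_or_eq hwA.2.1 with hstar | rfl
      · exact (hv hstar).elim
      · exact ⟨s, self_mem_A hwA.2.1, rfl⟩

end CSeq

open CSeq in
theorem stmt6_general (t t' : CSeq) (α : Ordinal) (hne : t.f α ≠ t'.f α)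
    (s : CSeq) (hs : s.Ext t) (hslen : s.len = α + 1) :
    ∀ p : G.Walk t t', p.IsPath → ∃ v ∈ p.support, v ∈ Astar s := by
  intro p _
  have hsα : s.f α ≠ 0 := (s.dom_iff α).1 (lt_len_of_len_eq hslen)
  have hst' : ¬ s.Ext t' := fun h => hne (by rw [hs α hsα, h α hsα])
  obtain ⟨d, hd, hu, hv⟩ := p.exists_boundary_dart {v | s.Ext v} hs hst'
  exact ⟨d.snd, p.dart_snd_mem_support_of_mem_darts hd, mem_Astar_of_adj d.adj hu hv⟩

open CSeq in
/-- Let `t, t'` be incomparable in the extension order, let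
`α ∈ dom t ∩ dom t'` be minimal with `t(α) ≠ t'(α)`, and let `s = t ↾ (α+1)`.
Then every path in `G` from `t` to `t'` meets `A*_s`. -/
theorem stmt6 (t t' : CSeq) (h1 : ¬ t.Ext t') (h2 : ¬ t'.Ext t)
    (α : Ordinal) (hαt : α < t.len) (hαt' : α < t'.len)
    (hne : t.f α ≠ t'.f α) (hmin : ∀ β < α, t.f β = t'.f β)
    (s : CSeq) (hs : s.Ext t) (hslen : s.len = α + 1) :
    ∀ p : G.Walk t t', p.IsPath → ∃ v ∈ p.support, v ∈ Astar s :=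
  stmt6_general t t' α hne s hs hslen
end

section
/- Let G' be the graph with vertex set T and edge set {t't : t' ∈ A_t}. Then G' has countable chromatic number: the colouring assigning to each s ∈ Σ(T) the colour last(s) ∈ ℕ and to each element of T \ Σ(T) a single fixed additional colour is a proper colouring of G' with countably many colours. -/
namespace CSeq

lemma lastVal_ne_zero {t : CSeq} (h : t.IsSucc) : t.lastVal ≠ 0 := by
  obtain ⟨α, hα⟩ := h
  have hp : Ordinal.pred t.len = α := by
    rw [hα, Ordinal.add_one_eq_succ, Ordinal.pred_succ]
  have hlt : α < t.len := by
    rw [hα, Ordinal.add_one_eq_succ]; exact Order.lt_succ α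
  rw [lastVal, hp]
  exact (t.dom_iff α).1 hlt

lemma ext_len_le {s t : CSeq} (h : s.Ext t) : s.len ≤ t.len := by
  by_contra hc
  push_neg at hc
  have h1 : s.f t.len ≠ 0 := (s.dom_iff _).1 hc
  have h2 : t.f t.len = s.f t.len := h _ h1
  have : t.len < t.len := (t.dom_iff _).2 (h2 ▸ h1)
  exact lt_irrefl _ this

lemma ext_eq_of_len {s t : CSeq} (h : s.Ext t) (hl : s.len = t.len) : s = t := by
  have hf : s.f = t.f := by
    funext β
    by_cases hβ : s.f β = 0
    · have : ¬ β < t.len := by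
        rw [← hl]; intro hlt; exact (s.dom_iff β).1 hlt hβ
      have : t.f β = 0 := by
        by_contra hc; exact this ((t.dom_iff β).2 hc)
      rw [hβ, this]
    · exact (h β hβ).symm
  cases s; cases t
  simp_all

open scoped Classical in
lemma key {t t' : CSeq} (h : t' ∈ A t) (hne : t' ≠ t) :
    (if t.IsSucc then t.lastVal else 0) ≠ (if t'.IsSucc then t'.lastVal else 0) := by
  obtain ⟨hext, hsucc', -⟩ := h
  rw [if_pos hsucc']
  by_cases hs : t.IsSucc
  · rw [if_pos hs]
    obtain ⟨α, hα⟩ := hs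
    obtain ⟨α', hα'⟩ := hsucc'
    have hle : t'.len ≤ t.len := ext_len_le hext
    have hlt : t'.len < t.len :=
      lt_of_le_of_ne hle (fun he => hne (ext_eq_of_len hext he))
    have hp : Ordinal.pred t.len = α := by
      rw [hα, Ordinal.add_one_eq_succ, Ordinal.pred_succ]
    have hp' : Ordinal.pred t'.len = α' := by
      rw [hα', Ordinal.add_one_eq_succ, Ordinal.pred_succ]
    intro heq
    rw [lastVal, lastVal, hp, hp'] at heq
    have hα'lt' : α' < t'.len := by
      rw [hα', Ordinal.add_one_eq_succ]; exact Order.lt_succ α'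
    have hαlt : α < t.len := by
      rw [hα, Ordinal.add_one_eq_succ]; exact Order.lt_succ α
    have hα'lt : α' < t.len := lt_of_lt_of_le hα'lt' hle
    have hne0 : t'.f α' ≠ 0 := (t'.dom_iff α').1 hα'lt'
    have hfe : t.f α' = t'.f α' := hext α' hne0
    have : α = α' := t.inj α α' hαlt hα'lt (heq.trans hfe.symm)
    have : t.len = t'.len := by rw [hα, hα', this]
    exact absurd this (ne_of_gt hlt)
  · rw [if_neg hs]
    exact (lastVal_ne_zero hsucc').symm

end CSeq

open CSeq in
open scoped Classical in
/-- The graph `G'` with edges `{t't : t' ∈ A_t}` has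
countable chromatic number: colouring each `s ∈ Σ(T)` by `last s ∈ ℕ` and all
elements of `T \ Σ(T)` by the single fixed additional colour `0` is a proper
colouring of `G'` with countably many colours. -/
theorem stmt10 :
    ∀ t t' : CSeq, G'.Adj t t' →
      (if t.IsSucc then t.lastVal else 0) ≠
      (if t'.IsSucc then t'.lastVal else 0) := by
  intro t t' hadj
  obtain ⟨hne, hor⟩ := hadj
  rcases hor with h | h
  · exact (key h hne).symm
  · exact key h (Ne.symm hne)
end
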